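/- Let T be a contraction on a Hilbert space H, V an isometry on a Hilbert space K, and X : K → H an invertible bounded operator with X V = T X. Then for every λ in the open unit disk, I - b_λ(T₁)* b_λ(T₁) = B⁻¹ (A - b_λ(V)* A b_λ(V)) B⁻¹, where A = X*X, B = (X*X)^{1/2}, and T₁ = W⁻¹ T W with X = W B the polar decomposition (W unitary). In particular A - b_λ(V)* A b_λ(V) is a positive operator. -/

import Mathlib

open scoped InnerProductSpace ComplexConjugate
open ContinuousLinearMap

/-- The Möbius transform `b_λ(T) = (T - λI)(I - conj(λ)T)⁻¹`. -/
noncomputable def blam {K : Type*} [NormedAddCommGroup K] [InnerProductSpace ℂ K]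
    [CompleteSpace K] (T : K →L[ℂ] K) (l : ℂ) : K →L[ℂ] K :=
  (T - l • (1 : K →L[ℂ] K)) * Ring.inverse ((1 : K →L[ℂ] K) - conj l • T)

/-!
The polar decomposition `X = W B` turns the intertwining `X V = T X` into the similarity
`V = B⁻¹ T₁ B`, and the Möbius transform commutes with similarities, so
`b_λ(V) = B⁻¹ b_λ(T₁) B`. Since `B` is self-adjoint and `A = B²`, this gives
`A - b_λ(V)* A b_λ(V) = B (I - b_λ(T₁)* b_λ(T₁)) B`. Positivity follows because `b_λ(T₁)` is a
contraction, by the identity `‖x - λ̄ y‖² - ‖y - λ x‖² = (1 - |λ|²)(‖x‖² - ‖y‖²)` with `y = T₁ x`.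
-/

theorem Ring.inverse_units_inv_mul_mul {M₀ : Type*} [MonoidWithZero M₀] (u : M₀ˣ) (a : M₀) :
    Ring.inverse (↑u⁻¹ * a * ↑u) = ↑u⁻¹ * Ring.inverse a * ↑u := by
  rw [Ring.inverse_mul (.inr u.isUnit), Ring.inverse_mul (.inl u⁻¹.isUnit), Ring.inverse_unit,
    Ring.inverse_unit, inv_inv, mul_assoc]

theorem IsSelfAdjoint.units_mul_self_sub_star_conj_mul_mul_self_mul_conj {R : Type*} [Ring R]
    [StarRing R] {u : Rˣ} (hu : IsSelfAdjoint (u : R)) (S : R) :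
    ↑u * ↑u - star (↑u⁻¹ * S * ↑u) * (↑u * ↑u) * (↑u⁻¹ * S * ↑u) =
      (u * (1 - star S * S) * u : R) := by
  have hinv : star (↑u⁻¹ : R) * ↑u = 1 := by
    rw [← hu.star_eq, ← star_mul, Units.mul_inv, star_one]
  have hconj : star (↑u⁻¹ * S * ↑u) * (↑u * ↑u) * (↑u⁻¹ * S * ↑u) =
      (u * (star S * S) * u : R) := by
    simp only [star_mul, hu.star_eq, mul_assoc]
    rw [← mul_assoc (star (↑u⁻¹ : R)), hinv, one_mul, Units.mul_inv_cancel_left]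
  rw [hconj, mul_sub, sub_mul, mul_one]

theorem star_mul_self_le_one_of_norm_le_one {A : Type*} [CStarAlgebra A] [PartialOrder A]
    [StarOrderedRing A] {a : A} (ha : ‖a‖ ≤ 1) : star a * a ≤ 1 :=
  calc star a * a ≤ algebraMap ℝ A (‖a‖ ^ 2) := CStarAlgebra.star_mul_le_algebraMap_norm_sq
    _ ≤ algebraMap ℝ A 1 := by gcongr; exact pow_le_one₀ (norm_nonneg a) ha
    _ = 1 := map_one _

theorem norm_sub_conj_smul_sq_sub_norm_sub_smul_sq {E : Type*} [NormedAddCommGroup E]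
    [InnerProductSpace ℂ E] (x y : E) (l : ℂ) :
    ‖x - conj l • y‖ ^ 2 - ‖y - l • x‖ ^ 2 = (1 - ‖l‖ ^ 2) * (‖x‖ ^ 2 - ‖y‖ ^ 2) := by
  rw [@norm_sub_sq ℂ, @norm_sub_sq ℂ, inner_smul_right, inner_smul_right, norm_smul, norm_smul,
    RCLike.norm_conj]
  have hre : conj l * ⟪x, y⟫_ℂ = conj (l * ⟪y, x⟫_ℂ) := by rw [map_mul, inner_conj_symm]
  rw [hre, RCLike.conj_re]
  ring

section Blam

variable {K : Type*} [NormedAddCommGroup K] [InnerProductSpace ℂ K] [CompleteSpace K]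

theorem norm_le_one_of_adjoint_comp_self_eq_one {H : Type*} [NormedAddCommGroup H]
    [InnerProductSpace ℂ H] [CompleteSpace H] {W : K →L[ℂ] H} (hW : adjoint W ∘L W = 1) :
    ‖W‖ ≤ 1 := by
  have hWW := norm_adjoint_comp_self W
  have hone : ‖(1 : K →L[ℂ] K)‖ ≤ 1 := norm_id_le
  rw [hW] at hWW
  nlinarith [norm_nonneg W]

theorem norm_adjoint_comp_comp_le {H : Type*} [NormedAddCommGroup H] [InnerProductSpace ℂ H]
    [CompleteSpace H] {W : K →L[ℂ] H} (hW : adjoint W ∘L W = 1) (T : H →L[ℂ] H) :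
    ‖adjoint W ∘L T ∘L W‖ ≤ ‖T‖ := by
  have hW1 := norm_le_one_of_adjoint_comp_self_eq_one hW
  calc ‖adjoint W ∘L T ∘L W‖ ≤ ‖adjoint W‖ * (‖T‖ * ‖W‖) :=
        (opNorm_comp_le _ _).trans (by gcongr; exact opNorm_comp_le _ _)
    _ ≤ 1 * (‖T‖ * 1) := by rw [LinearIsometryEquiv.norm_map]; gcongr
    _ = ‖T‖ := by ring

theorem blam_units_inv_mul_mul (u : (K →L[ℂ] K)ˣ) (S : K →L[ℂ] K) (l : ℂ) :
    blam (↑u⁻¹ * S * ↑u : K →L[ℂ] K) l = (↑u⁻¹ * blam S l * ↑u : K →L[ℂ] K) := by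
  have hnum : (↑u⁻¹ * S * ↑u - l • 1 : K →L[ℂ] K) = ↑u⁻¹ * (S - l • 1) * ↑u := by
    simp only [mul_sub, sub_mul, mul_smul_comm, smul_mul_assoc, mul_one, Units.inv_mul]
  have hden : (1 - conj l • (↑u⁻¹ * S * ↑u) : K →L[ℂ] K) = ↑u⁻¹ * (1 - conj l • S) * ↑u := by
    simp only [mul_sub, sub_mul, mul_smul_comm, smul_mul_assoc, mul_one, Units.inv_mul]
  rw [blam, blam, hnum, hden, Ring.inverse_units_inv_mul_mul]
  simp only [mul_assoc, Units.mul_inv_cancel_left]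

theorem isUnit_one_sub_conj_smul {T : K →L[ℂ] K} (hT : ‖T‖ ≤ 1) {l : ℂ} (hl : ‖l‖ < 1) :
    IsUnit (1 - conj l • T) := by
  refine (Units.oneSub (conj l • T) ?_).isUnit
  calc ‖conj l • T‖ = ‖l‖ * ‖T‖ := by rw [norm_smul, RCLike.norm_conj]
    _ ≤ ‖l‖ * 1 := by gcongr
    _ < 1 := by simpa using hl

theorem norm_blam_le_one {T : K →L[ℂ] K} (hT : ‖T‖ ≤ 1) {l : ℂ} (hl : ‖l‖ < 1) :
    ‖blam T l‖ ≤ 1 := by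
  have hu := isUnit_one_sub_conj_smul hT hl
  refine opNorm_le_bound _ zero_le_one fun x => ?_
  obtain ⟨z, rfl⟩ : ∃ z, (1 - conj l • T) z = x :=
    ⟨Ring.inverse (1 - conj l • T) x, by
      rw [← mul_apply_eq_comp, Ring.mul_inverse_cancel _ hu, one_apply_eq_self]⟩
  have hblam : blam T l ((1 - conj l • T) z) = T z - l • z := by
    rw [blam, mul_apply_eq_comp, ← mul_apply_eq_comp (Ring.inverse _),
      Ring.inverse_mul_cancel _ hu]
    simp
  have hgap := norm_sub_conj_smul_sq_sub_norm_sub_smul_sq z (T z) l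
  have hl2 : ‖l‖ ^ 2 ≤ 1 := pow_le_one₀ (norm_nonneg l) hl.le
  have hTz : ‖T z‖ ^ 2 ≤ ‖z‖ ^ 2 := by
    gcongr
    simpa using T.le_of_opNorm_le hT z
  rw [hblam, one_mul, ← pow_le_pow_iff_left₀ (norm_nonneg _) (norm_nonneg _) two_ne_zero]
  simp only [sub_apply, one_apply_eq_self, smul_apply]
  nlinarith [mul_nonneg (sub_nonneg.2 hl2) (sub_nonneg.2 hTz)]

end Blam

theorem blam_defect_conjugation_general {H K : Type*} [NormedAddCommGroup H]
    [InnerProductSpace ℂ H] [CompleteSpace H] [NormedAddCommGroup K]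
    [InnerProductSpace ℂ K] [CompleteSpace K]
    (T : H →L[ℂ] H) (hT : ‖T‖ ≤ 1) (V : K →L[ℂ] K)
    (X : K →L[ℂ] H)
    (hint : X.comp V = T.comp X)
    (W : K →L[ℂ] H) (hW₁ : (adjoint W).comp W = 1)
    (B : K →L[ℂ] K) (hB : B.IsPositive) (hB2 : B * B = (adjoint X).comp X)
    (hpolar : X = W.comp B)
    (Binv : K →L[ℂ] K) (hBinv₁ : Binv * B = 1) (hBinv₂ : B * Binv = 1)
    (l : ℂ) (hl : ‖l‖ < 1) :
    ((1 : K →L[ℂ] K) -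
        (adjoint (blam ((adjoint W).comp (T.comp W)) l)).comp
          (blam ((adjoint W).comp (T.comp W)) l) =
      Binv *
        (((adjoint X).comp X) -
          (adjoint (blam V l)).comp ((((adjoint X).comp X)).comp (blam V l))) *
        Binv) ∧
    (((adjoint X).comp X) -
        (adjoint (blam V l)).comp ((((adjoint X).comp X)).comp (blam V l))).IsPositive := by
  set T₁ := (adjoint W).comp (T.comp W)
  set S := blam T₁ l
  set A := (adjoint X).comp X
  let u : (K →L[ℂ] K)ˣ := ⟨B, Binv, hBinv₂, hBinv₁⟩
  have hBV : B * V = T₁ * B :=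
    calc B * V = ((adjoint W).comp W).comp (B.comp V) := by rw [hW₁]; rfl
      _ = (adjoint W).comp (X.comp V) := by rw [hpolar]; rfl
      _ = (adjoint W).comp (T.comp X) := by rw [hint]
      _ = T₁ * B := by rw [hpolar]; rfl
  have hV : V = ↑u⁻¹ * T₁ * ↑u := by
    show V = Binv * T₁ * B
    rw [mul_assoc, ← hBV, ← mul_assoc, hBinv₁, one_mul]
  have hdefect : A - (adjoint (blam V l)).comp (A.comp (blam V l)) =
      B * (1 - adjoint S * S) * B := by
    rw [← hB2, hV, blam_units_inv_mul_mul]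
    simp only [← mul_def, ← star_eq_adjoint]
    exact hB.isSelfAdjoint.units_mul_self_sub_star_conj_mul_mul_self_mul_conj (u := u) S
  have hS : ‖S‖ ≤ 1 := norm_blam_le_one ((norm_adjoint_comp_comp_le hW₁ T).trans hT) hl
  have hBadj : adjoint B = B := hB.isSelfAdjoint
  rw [hdefect]
  refine ⟨?_, ?_⟩
  · rw [← mul_assoc, ← mul_assoc, hBinv₁, one_mul, mul_assoc, hBinv₂, mul_one]; rfl
  · have hpos := ((le_def _ _).1 (star_mul_self_le_one_of_norm_le_one hS)).conj_adjoint B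
    rwa [hBadj] at hpos

/-- Let `T` be a contraction on `H`, `V` an isometry on `K`, and `X : K → H` an
invertible bounded operator with `XV = TX`. Write the polar decomposition
`X = W B` with `W : K → H` unitary, `B = (X*X)^{1/2}` positive and invertible
(with inverse `B⁻¹`), and set `A = X*X = B²` and `T₁ = W⁻¹TW`. Then for every `λ`
in the open unit disk,
`I - b_λ(T₁)* b_λ(T₁) = B⁻¹ (A - b_λ(V)* A b_λ(V)) B⁻¹`;
in particular `A - b_λ(V)* A b_λ(V)` is a positive operator. -/
theorem blam_defect_conjugation {H K : Type*} [NormedAddCommGroup H]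
    [InnerProductSpace ℂ H] [CompleteSpace H] [NormedAddCommGroup K]
    [InnerProductSpace ℂ K] [CompleteSpace K]
    (T : H →L[ℂ] H) (hT : ‖T‖ ≤ 1) (V : K →L[ℂ] K) (hV : ∀ x : K, ‖V x‖ = ‖x‖)
    (X : K →L[ℂ] H) (Xinv : H →L[ℂ] K)
    (hX₁ : Xinv.comp X = 1) (hX₂ : X.comp Xinv = 1)
    (hint : X.comp V = T.comp X)
    (W : K →L[ℂ] H) (hW₁ : (adjoint W).comp W = 1) (hW₂ : W.comp (adjoint W) = 1)
    (B : K →L[ℂ] K) (hB : B.IsPositive) (hB2 : B * B = (adjoint X).comp X)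
    (hpolar : X = W.comp B)
    (Binv : K →L[ℂ] K) (hBinv₁ : Binv * B = 1) (hBinv₂ : B * Binv = 1)
    (l : ℂ) (hl : ‖l‖ < 1) :
    ((1 : K →L[ℂ] K) -
        (adjoint (blam ((adjoint W).comp (T.comp W)) l)).comp
          (blam ((adjoint W).comp (T.comp W)) l) =
      Binv *
        (((adjoint X).comp X) -
          (adjoint (blam V l)).comp ((((adjoint X).comp X)).comp (blam V l))) *
        Binv) ∧
    (((adjoint X).comp X) -
        (adjoint (blam V l)).comp ((((adjoint X).comp X)).comp (blam V l))).IsPositive :=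
  blam_defect_conjugation_general T hT V X hint W hW₁ B hB hB2 hpolar Binv hBinv₁ hBinv₂ l hl
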